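/- Suppose W ∈ ℝ^{m×d} is a random matrix whose entries are i.i.d. uniform on {−1,+1}, c = 1 ∈ ℝ^m is the all-ones vector, x̄ = 0, and ε = 1. Then there exists a universal constant γ such that with probability at least 1 − exp(−(d+m)), the SDP relaxation value satisfies f_SDP ≤ γ(m√d + d√m), while the LP relaxation value satisfies f_LP ≥ md/2 almost surely. In particular f_LP/f_SDP = Ω(min(√d, √m)). -/

import Mathlib

open MeasureTheory

/-- LP relaxation feasibility for `z = ReLU(W x)` over `‖x‖_∞ ≤ 1` (i.e. `x̄ = 0`,
`ε = 1`), with the convex outer envelope of each ReLU using the interval-arithmetic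
pre-activation bounds `s_i = −‖W_i‖₁`, `t_i = ‖W_i‖₁`. -/
def LPFeasible {m d : ℕ} (W : Matrix (Fin m) (Fin d) ℝ)
    (x : Fin d → ℝ) (z : Fin m → ℝ) : Prop :=
  (∀ i, 0 ≤ z i) ∧
  (∀ i, (W.mulVec x) i ≤ z i) ∧
  (∀ i,
    let s : ℝ := -∑ j, |W i j|
    let t : ℝ := ∑ j, |W i j|
    z i ≤ (max t 0 - max s 0) / (t - s) * ((W.mulVec x) i - s) + max s 0) ∧
  (∀ j, |x j| ≤ 1)

/-- LP relaxation value with objective vector `c = 𝟏`. -/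
noncomputable def fLP {m d : ℕ} (W : Matrix (Fin m) (Fin d) ℝ) : ℝ :=
  sSup {v : ℝ | ∃ x z, LPFeasible W x z ∧ v = ∑ i, z i}

/-- SDP relaxation feasibility for `z = ReLU(W x)` over `‖x‖_∞ ≤ 1`: a PSD moment
matrix `P` indexed by `{1, x₁,…,x_d, z₁,…,z_m}` with `P[1] = 1`, `P[z] ≥ 0`,
`P[z] ≥ W P[x]`, `P[z_i²] = W_iᵀ P[x z_i]` and `P[x_j²] ≤ 1`. -/
def SDPFeasible {m d : ℕ} (W : Matrix (Fin m) (Fin d) ℝ)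
    (P : Matrix (Unit ⊕ Fin d ⊕ Fin m) (Unit ⊕ Fin d ⊕ Fin m) ℝ) : Prop :=
  P.PosSemidef ∧
  P (Sum.inl ()) (Sum.inl ()) = 1 ∧
  (∀ i, 0 ≤ P (Sum.inl ()) (Sum.inr (Sum.inr i))) ∧
  (∀ i, ∑ j, W i j * P (Sum.inl ()) (Sum.inr (Sum.inl j)) ≤
    P (Sum.inl ()) (Sum.inr (Sum.inr i))) ∧
  (∀ i, P (Sum.inr (Sum.inr i)) (Sum.inr (Sum.inr i)) =
    ∑ j, W i j * P (Sum.inr (Sum.inl j)) (Sum.inr (Sum.inr i))) ∧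
  (∀ j, P (Sum.inr (Sum.inl j)) (Sum.inr (Sum.inl j)) ≤ 1)

/-- SDP relaxation value with objective vector `c = 𝟏`. -/
noncomputable def fSDP {m d : ℕ} (W : Matrix (Fin m) (Fin d) ℝ) : ℝ :=
  sSup {v : ℝ | ∃ P, SDPFeasible W P ∧
    v = ∑ i, P (Sum.inl ()) (Sum.inr (Sum.inr i))}

/-- The uniform distribution on `{−1, +1} ⊆ ℝ`. -/
noncomputable def signMeasure : Measure ℝ :=
  (2 : ENNReal)⁻¹ • Measure.dirac (1 : ℝ) + (2 : ENNReal)⁻¹ • Measure.dirac (-1 : ℝ)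

/-!
The LP bound holds for every matrix: `x = 0`, `z_i = ‖W_i‖₁ / 2` is LP-feasible, which for a sign
matrix gives `m d / 2`.

For the SDP, write the PSD moment matrix as the Gram matrix of vectors `v`, `x_j`, `z_i`. The
constraint `‖z_i‖² = ⟪∑_j W_ij x_j, z_i⟫` forces `‖z_i‖ ≤ ‖∑_j W_ij x_j‖`, so by Cauchy–Schwarz the
objective `∑_i ⟪v, z_i⟫` is at most `‖W‖₂ √(m d)`.

It remains to show `‖W‖₂ ≤ 6 (√d + √m)` with probability `≥ 1 - exp (-(d + m))`. The unit spheres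
of `ℝ^d` and `ℝ^m` have `1/4`-nets of sizes `9^d` and `9^m` (a volume argument), and `‖W‖₂` is at
most twice the largest `⟪v, W u⟫` over net points. Each `⟪v, W u⟫` is a Rademacher sum with unit
variance, so a Chernoff bound and a union bound over the `9^(d+m)` pairs conclude. Probabilities are
counted over sign patterns, since the law of `W` is uniform on the `2^(m d)` sign matrices.
-/

open Metric Module
open scoped Matrix RealInnerProductSpace NNReal ENNReal

-- `r / (2 * r) * (y + r)` is the upper chord of ReLU over `[-r, r]` in `LPFeasible`; for `r = 0`
-- division by zero makes it `0`.
lemma div_two_mul_mul_add_le {r y : ℝ} (hr : 0 ≤ r) (hy : y ≤ r) : r / (2 * r) * (y + r) ≤ r := by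
  rcases hr.eq_or_lt with rfl | hr
  · simp
  · rw [div_mul_cancel_right₀ hr.ne']
    linarith

lemma div_two_mul_mul_zero_add {r : ℝ} (hr : 0 ≤ r) : r / (2 * r) * (0 + r) = r / 2 := by
  rcases hr.eq_or_lt with rfl | hr
  · simp
  · rw [zero_add]; field_simp

lemma LPFeasible.le_sum_abs {m d : ℕ} {W : Matrix (Fin m) (Fin d) ℝ} {x : Fin d → ℝ}
    {z : Fin m → ℝ} (h : LPFeasible W x z) (i : Fin m) : z i ≤ ∑ j, |W i j| := by
  obtain ⟨-, -, hup, hx⟩ := h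
  have hr : 0 ≤ ∑ j, |W i j| := Finset.sum_nonneg fun j _ => abs_nonneg _
  have hWx : (W *ᵥ x) i ≤ ∑ j, |W i j| :=
    calc (W *ᵥ x) i = ∑ j, W i j * x j := rfl
      _ ≤ ∑ j, |W i j * x j| := Finset.sum_le_sum fun j _ => le_abs_self _
      _ ≤ ∑ j, |W i j| := Finset.sum_le_sum fun j _ => by
          rw [abs_mul]; exact mul_le_of_le_one_right (abs_nonneg _) (hx j)
  have := hup i
  simp only [max_eq_left hr, max_eq_right (neg_nonpos.2 hr), sub_zero, sub_neg_eq_add,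
    add_zero, ← two_mul] at this
  exact this.trans (div_two_mul_mul_add_le hr hWx)

lemma lpFeasible_zero_half_sum_abs {m d : ℕ} (W : Matrix (Fin m) (Fin d) ℝ) :
    LPFeasible W 0 fun i => (∑ j, |W i j|) / 2 := by
  have hr : ∀ i, 0 ≤ ∑ j, |W i j| := fun i => Finset.sum_nonneg fun j _ => abs_nonneg _
  refine ⟨fun i => by have := hr i; positivity, fun i => ?_, fun i => ?_, fun j => by simp⟩
  · simpa using div_nonneg (hr i) zero_le_two
  · simp only [max_eq_left (hr i), max_eq_right (neg_nonpos.2 (hr i)), Matrix.mulVec_zero,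
      Pi.zero_apply, sub_zero, sub_neg_eq_add, add_zero, ← two_mul]
    rw [div_two_mul_mul_zero_add (hr i)]

lemma sum_abs_div_two_le_fLP {m d : ℕ} (W : Matrix (Fin m) (Fin d) ℝ) :
    (∑ i, ∑ j, |W i j|) / 2 ≤ fLP W := by
  refine le_csSup ⟨∑ i, ∑ j, |W i j|, ?_⟩ ⟨0, _, lpFeasible_zero_half_sum_abs W, Finset.sum_div ..⟩
  rintro v ⟨x, z, h, rfl⟩
  exact Finset.sum_le_sum fun i _ => h.le_sum_abs i

lemma Matrix.PosSemidef.exists_eq_inner {ι : Type*} [Fintype ι] {P : Matrix ι ι ℝ}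
    (hP : P.PosSemidef) :
    ∃ (r : ℕ) (e : ι → EuclideanSpace ℝ (Fin r)), ∀ α β, P α β = ⟪e α, e β⟫ := by
  obtain ⟨r, v, rfl⟩ := Matrix.posSemidef_iff_eq_sum_vecMulVec.1 hP
  refine ⟨r, fun α => WithLp.toLp 2 fun k => v k α, fun α β => ?_⟩
  simp [Matrix.sum_apply, Matrix.vecMulVec_apply, PiLp.inner_apply, mul_comm]

lemma norm_le_of_norm_sq_le_inner {E : Type*} [NormedAddCommGroup E] [InnerProductSpace ℝ E]
    {y z : E} (h : ‖z‖ ^ 2 ≤ ⟪y, z⟫) : ‖z‖ ≤ ‖y‖ := by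
  have := h.trans (real_inner_le_norm y z)
  rcases (norm_nonneg z).eq_or_lt with hz | hz
  · rw [← hz]; exact norm_nonneg y
  · nlinarith

section L2OpNorm

open scoped Matrix.Norms.L2Operator

lemma Matrix.sum_mulVec_sq_le {m n : Type*} [Fintype m] [Fintype n] [DecidableEq n]
    (W : Matrix m n ℝ) (u : n → ℝ) : ∑ i, (W *ᵥ u) i ^ 2 ≤ ‖W‖ ^ 2 * ∑ j, u j ^ 2 := by
  have h := pow_le_pow_left₀ (norm_nonneg _) (W.l2_opNorm_mulVec (WithLp.toLp 2 u)) 2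
  rw [mul_pow, EuclideanSpace.norm_sq_eq, EuclideanSpace.norm_sq_eq] at h
  simpa using h

lemma Matrix.sum_norm_sum_smul_sq_le {m n κ : Type*} [Fintype m] [Fintype n] [DecidableEq n]
    [Fintype κ] (W : Matrix m n ℝ) (x : n → EuclideanSpace ℝ κ) :
    ∑ i, ‖∑ j, W i j • x j‖ ^ 2 ≤ ‖W‖ ^ 2 * ∑ j, ‖x j‖ ^ 2 := by
  simp only [EuclideanSpace.norm_sq_eq, Real.norm_eq_abs, sq_abs]
  rw [Finset.sum_comm, Finset.sum_comm (f := fun j k => x j k ^ 2), Finset.mul_sum]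
  refine Finset.sum_le_sum fun k _ => ?_
  simpa [Matrix.mulVec, dotProduct] using W.sum_mulVec_sq_le fun j => x j k

lemma Matrix.sum_inner_le_l2_opNorm_mul {m d : ℕ} {κ : Type*} [Fintype κ]
    (W : Matrix (Fin m) (Fin d) ℝ) {v : EuclideanSpace ℝ κ} (hv : ‖v‖ ≤ 1)
    {x : Fin d → EuclideanSpace ℝ κ} (hx : ∀ j, ‖x j‖ ≤ 1) {z : Fin m → EuclideanSpace ℝ κ}
    (hz : ∀ i, ‖z i‖ ^ 2 ≤ ⟪∑ j, W i j • x j, z i⟫) :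
    ∑ i, ⟪v, z i⟫ ≤ ‖W‖ * √m * √d := by
  set y := fun i => ∑ j, W i j • x j
  have hy : (∑ i, ‖y i‖) ^ 2 ≤ (‖W‖ * √m * √d) ^ 2 := by
    rw [mul_pow, mul_pow, Real.sq_sqrt (Nat.cast_nonneg _), Real.sq_sqrt (Nat.cast_nonneg _)]
    calc (∑ i, ‖y i‖) ^ 2 ≤ m * ∑ i, ‖y i‖ ^ 2 := by
          simpa using sq_sum_le_card_mul_sum_sq (s := Finset.univ) (f := fun i => ‖y i‖)
      _ ≤ m * (‖W‖ ^ 2 * ∑ j : Fin d, 1) := by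
          gcongr
          refine (W.sum_norm_sum_smul_sq_le x).trans ?_
          gcongr with j
          exact pow_le_one₀ (norm_nonneg _) (hx j)
      _ = (‖W‖ ^ 2 * m * d) := by simp; ring
  calc ∑ i, ⟪v, z i⟫ ≤ ∑ i, ‖z i‖ := Finset.sum_le_sum fun i _ =>
        (real_inner_le_norm v (z i)).trans (mul_le_of_le_one_left (norm_nonneg _) hv)
    _ ≤ ∑ i, ‖y i‖ := Finset.sum_le_sum fun i _ => norm_le_of_norm_sq_le_inner (hz i)
    _ ≤ ‖W‖ * √m * √d :=
        (pow_le_pow_iff_left₀ (Finset.sum_nonneg fun i _ => norm_nonneg _) (by positivity)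
          two_ne_zero).1 hy

lemma fSDP_le_l2_opNorm {m d : ℕ} (W : Matrix (Fin m) (Fin d) ℝ) :
    fSDP W ≤ ‖W‖ * √m * √d := by
  refine Real.sSup_le ?_ (by positivity)
  rintro _ ⟨P, ⟨hPSD, h11, -, -, hz, hx⟩, rfl⟩
  obtain ⟨r, e, he⟩ := hPSD.exists_eq_inner
  simp only [he, real_inner_self_eq_norm_sq] at h11 hz hx ⊢
  refine W.sum_inner_le_l2_opNorm_mul (sq_le_one_iff₀ (norm_nonneg _) |>.1 h11.le)
    (fun j => sq_le_one_iff₀ (norm_nonneg _) |>.1 (hx j)) fun i => ?_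
  simp [hz, sum_inner, real_inner_smul_left]

end L2OpNorm

section Nets

variable {E : Type*} [NormedAddCommGroup E] [NormedSpace ℝ E] [FiniteDimensional ℝ E]

lemma card_le_of_isSeparated_of_subset_closedBall {ε : ℝ≥0} (hε : 0 < ε) {C : Finset E}
    (hC : (C : Set E) ⊆ closedBall 0 1) (hsep : IsSeparated ε (C : Set E)) :
    (C.card : ℝ) ≤ (1 + 2 / ε) ^ finrank ℝ E := by
  borelize E
  set μ : Measure E := Measure.addHaar
  set r : ℝ := ε / 2
  have hr : 0 < r := by positivity
  have hdisj : (C : Set E).PairwiseDisjoint fun c => ball c r := by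
    intro c hc c' hc' hne
    refine ball_disjoint_ball ?_
    have : (ε : ENNReal) < edist c c' := hsep hc hc' hne
    rw [edist_dist, ENNReal.coe_nnreal_eq] at this
    exact (by ring : r + r = ε).le.trans (ENNReal.ofReal_lt_ofReal_iff'.1 this).1.le
  have hsub : (⋃ c ∈ C, ball c r) ⊆ ball 0 (1 + r) := by
    refine Set.iUnion₂_subset fun c hc z hz => ?_
    have hc1 := mem_closedBall_zero_iff.1 (hC hc)
    rw [mem_ball_zero_iff]
    calc ‖z‖ ≤ ‖c‖ + dist z c := by simpa [dist_eq_norm] using norm_le_insert' z c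
      _ < 1 + r := by linarith [mem_ball.1 hz]
  have hvol : (C.card : ENNReal) * ENNReal.ofReal (r ^ finrank ℝ E) * μ (ball 0 1)
      ≤ ENNReal.ofReal ((1 + r) ^ finrank ℝ E) * μ (ball 0 1) := by
    calc (C.card : ENNReal) * ENNReal.ofReal (r ^ finrank ℝ E) * μ (ball 0 1)
        = ∑ c ∈ C, μ (ball c r) := by
          simp [μ.addHaar_ball_of_pos _ hr, mul_assoc]
      _ = μ (⋃ c ∈ C, ball c r) := (measure_biUnion_finset hdisj fun _ _ => measurableSet_ball).symm
      _ ≤ μ (ball 0 (1 + r)) := measure_mono hsub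
      _ = _ := μ.addHaar_ball_of_pos _ (by positivity)
  have hcard : (C.card : ℝ) * r ^ finrank ℝ E ≤ (1 + r) ^ finrank ℝ E := by
    rw [ENNReal.mul_le_mul_iff_left (measure_ball_pos μ 0 one_pos).ne' measure_ball_lt_top.ne,
      ← ENNReal.ofReal_natCast, ← ENNReal.ofReal_mul (Nat.cast_nonneg _),
      ENNReal.ofReal_le_ofReal_iff (by positivity)] at hvol
    exact hvol
  calc (C.card : ℝ) ≤ (1 + r) ^ finrank ℝ E / r ^ finrank ℝ E := by
        rwa [le_div_iff₀ (by positivity)]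
    _ = (1 + 2 / ε) ^ finrank ℝ E := by
        rw [← div_pow]
        congr 1
        field_simp
        ring

lemma exists_finset_isCover_sphere {ε : ℝ≥0} (hε : 0 < ε) :
    ∃ N : Finset E, (N : Set E) ⊆ sphere 0 1 ∧ (N.card : ℝ) ≤ (1 + 2 / ε) ^ finrank ℝ E ∧
      IsCover ε (sphere 0 1) (N : Set E) := by
  set B : ℝ := (1 + 2 / ε) ^ finrank ℝ E
  have hcard : ∀ C : Finset E, (C : Set E) ⊆ sphere 0 1 → IsSeparated ε (C : Set E) →
      (C.card : ℝ) ≤ B := fun C hC hsep =>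
    card_le_of_isSeparated_of_subset_closedBall hε (hC.trans sphere_subset_closedBall) hsep
  have hpack : packingNumber ε (sphere (0 : E) 1) ≠ ⊤ := by
    refine ne_top_of_le_ne_top (ENat.natCast_ne_top ⌊B⌋₊)
      (iSup₂_le fun C hC => iSup_le fun hsep => ?_)
    by_contra! hlt
    obtain ⟨t, htC, ht⟩ := Set.exists_subset_encard_eq (Order.add_one_le_of_lt hlt)
    obtain ⟨t, rfl⟩ := (Set.finite_of_encard_eq_coe ht).exists_finset_coe
    rw [Set.encard_coe_eq_coe_finsetCard] at ht
    have := hcard t (htC.trans hC) (hsep.subset htC)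
    rw [show t.card = ⌊B⌋₊ + 1 by exact_mod_cast ht] at this
    exact (Nat.lt_floor_add_one B).not_ge (by exact_mod_cast this)
  have hfin : (maximalSeparatedSet ε (sphere (0 : E) 1)).Finite :=
    Set.encard_ne_top_iff.1 ((encard_maximalSeparatedSet hpack).trans_ne hpack)
  refine ⟨hfin.toFinset, by simpa using maximalSeparatedSet_subset, hcard _ (by simpa using
    maximalSeparatedSet_subset) (by simpa using isSeparated_maximalSeparatedSet), by
    simpa using isCover_maximalSeparatedSet hpack⟩

end Nets

lemma Metric.IsCover.exists_dist_le {X : Type*} [PseudoMetricSpace X] {ε : ℝ≥0} {s N : Set X}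
    (h : IsCover ε s N) {x : X} (hx : x ∈ s) : ∃ y ∈ N, dist x y ≤ ε := by
  simpa using h.subset_iUnion_closedBall hx

section OpNorm

variable {E F : Type*} [NormedAddCommGroup E] [NormedSpace ℝ E]
  [NormedAddCommGroup F] [InnerProductSpace ℝ F]

lemma ContinuousLinearMap.opNorm_le_of_isCover (T : E →L[ℝ] F) {N : Set E} {M : Set F}
    (hN : N ⊆ sphere 0 1) (hNc : IsCover (1 / 4) (sphere 0 1) N)
    (hMc : IsCover (1 / 4) (sphere 0 1) M) {s : ℝ} (hs : 0 ≤ s)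
    (h : ∀ u ∈ N, ∀ v ∈ M, ⟪v, T u⟫ ≤ s) : ‖T‖ ≤ 2 * s := by
  suffices ‖T‖ ≤ s + ‖T‖ / 2 by linarith
  refine T.opNorm_le_of_unit_norm (by positivity) fun u hu => ?_
  rcases eq_or_ne (T u) 0 with hTu | hTu
  · rw [hTu, norm_zero]; positivity
  set v := ‖T u‖⁻¹ • T u
  have hv : ‖v‖ = 1 := norm_smul_inv_norm hTu
  obtain ⟨u₀, hu₀, huu₀⟩ := hNc.exists_dist_le (mem_sphere_zero_iff_norm.2 hu)
  obtain ⟨v₀, hv₀, hvv₀⟩ := hMc.exists_dist_le (mem_sphere_zero_iff_norm.2 hv)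
  rw [dist_eq_norm] at huu₀ hvv₀
  norm_num at huu₀ hvv₀
  have hTu₀ : ‖T u₀‖ ≤ ‖T‖ := by
    simpa [mem_sphere_zero_iff_norm.1 (hN hu₀)] using T.le_opNorm u₀
  have hTuu₀ : ‖T (u - u₀)‖ ≤ ‖T‖ / 4 := by
    calc ‖T (u - u₀)‖ ≤ ‖T‖ * ‖u - u₀‖ := T.le_opNorm _
      _ ≤ ‖T‖ * (1 / 4) := by gcongr
      _ = ‖T‖ / 4 := by ring
  calc ‖T u‖ = ⟪v, T u⟫ := by
        rw [real_inner_smul_left, real_inner_self_eq_norm_sq]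
        field_simp [norm_ne_zero_iff.2 hTu]
    _ = ⟪v₀, T u₀⟫ + ⟪v, T (u - u₀)⟫ + ⟪v - v₀, T u₀⟫ := by
        simp only [inner_sub_left, inner_sub_right, map_sub]; ring
    _ ≤ s + ‖v‖ * ‖T (u - u₀)‖ + ‖v - v₀‖ * ‖T u₀‖ := by
        gcongr
        · exact h u₀ hu₀ v₀ hv₀
        · exact real_inner_le_norm _ _
        · exact real_inner_le_norm _ _
    _ ≤ s + 1 * (‖T‖ / 4) + 1 / 4 * ‖T‖ := by
        rw [hv]; gcongr
    _ = s + ‖T‖ / 2 := by ring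

end OpNorm

def boolSign (b : Bool) : ℝ := if b then 1 else -1

section Chernoff

variable {ι : Type*} [Fintype ι] [DecidableEq ι]

lemma sum_exp_sum_mul_boolSign (a : ι → ℝ) :
    ∑ g : ι → Bool, Real.exp (∑ k, a k * boolSign (g k)) = ∏ k, 2 * Real.cosh (a k) := by
  simp_rw [Real.exp_sum, Real.cosh_eq]
  rw [← Fintype.prod_sum fun k b => Real.exp (a k * boolSign b)]
  simp [boolSign, mul_div_cancel₀]

lemma sum_exp_sum_mul_boolSign_le (a : ι → ℝ) :
    ∑ g : ι → Bool, Real.exp (∑ k, a k * boolSign (g k)) ≤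
      2 ^ Fintype.card ι * Real.exp ((∑ k, a k ^ 2) / 2) := by
  rw [sum_exp_sum_mul_boolSign, Finset.sum_div, Real.exp_sum, ← Finset.card_univ,
    ← Finset.prod_const, ← Finset.prod_mul_distrib]
  exact Finset.prod_le_prod (fun k _ => by positivity)
    fun k _ => by gcongr; exact Real.cosh_le_exp_half_sq (a k)

lemma card_filter_le_sum_mul_boolSign {a : ι → ℝ} (ha : ∑ k, a k ^ 2 ≤ 1) {s : ℝ} (hs : 0 ≤ s) :
    ((Finset.univ.filter fun g : ι → Bool => s ≤ ∑ k, a k * boolSign (g k)).card : ℝ) ≤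
      2 ^ Fintype.card ι * Real.exp (-s ^ 2 / 2) := by
  set X : (ι → Bool) → ℝ := fun g => ∑ k, a k * boolSign (g k)
  have hX : ∀ g, s * X g = ∑ k, (s * a k) * boolSign (g k) := fun g => by
    simp only [X, Finset.mul_sum, mul_assoc]
  calc ((Finset.univ.filter fun g => s ≤ X g).card : ℝ)
      = ∑ g ∈ Finset.univ.filter fun g => s ≤ X g, (1 : ℝ) := by simp
    _ ≤ ∑ g ∈ Finset.univ.filter fun g => s ≤ X g, Real.exp (s * X g - s ^ 2) :=
        Finset.sum_le_sum fun g hg => Real.one_le_exp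
          (by nlinarith [(Finset.mem_filter.1 hg).2] : (0 : ℝ) ≤ s * X g - s ^ 2)
    _ ≤ ∑ g, Real.exp (s * X g - s ^ 2) :=
        Finset.sum_le_sum_of_subset_of_nonneg (Finset.filter_subset _ _) fun _ _ _ => by positivity
    _ = Real.exp (-s ^ 2) * ∑ g : ι → Bool, Real.exp (∑ k, (s * a k) * boolSign (g k)) := by
        rw [Finset.mul_sum]
        refine Finset.sum_congr rfl fun g _ => ?_
        rw [← Real.exp_add, hX]; ring_nf
    _ ≤ Real.exp (-s ^ 2) * (2 ^ Fintype.card ι * Real.exp ((∑ k, (s * a k) ^ 2) / 2)) := by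
        gcongr; exact sum_exp_sum_mul_boolSign_le _
    _ ≤ 2 ^ Fintype.card ι * Real.exp (-s ^ 2 / 2) := by
        rw [mul_left_comm, ← Real.exp_add]
        gcongr
        simp_rw [mul_pow, ← Finset.mul_sum]
        nlinarith [sq_nonneg s]

end Chernoff

lemma MeasureTheory.Measure.pi_smul_sum_dirac {ι T β : Type*} [Fintype ι] [DecidableEq ι]
    [Fintype T] [MeasurableSpace β] (v : T → β) {c : ℝ≥0∞} (hc : c ≠ ⊤) :
    Measure.pi (fun _ : ι => c • ∑ t, Measure.dirac (v t)) =
      c ^ Fintype.card ι • ∑ f : ι → T, Measure.dirac (v ∘ f) := by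
  have : IsFiniteMeasure (c • ∑ t, Measure.dirac (v t)) := by
    constructor; simpa using ENNReal.mul_lt_top hc.lt_top (ENNReal.natCast_lt_top _)
  refine Measure.pi_eq fun s hs => ?_
  have hdirac : ∀ f : ι → T, Measure.dirac (v ∘ f) (Set.univ.pi s) =
      ∏ i, (s i).indicator 1 (v (f i)) := fun f => by
    rw [Measure.dirac_apply' _ (MeasurableSet.univ_pi hs), ← Finset.coe_univ,
      Set.indicator_pi_one_apply]
    rfl
  simp only [Measure.smul_apply, Measure.finsetSum_apply, smul_eq_mul, hdirac,
    Measure.dirac_apply' _ (hs _)]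
  rw [Finset.prod_mul_distrib, Finset.prod_const, Finset.card_univ, Fintype.prod_sum]

lemma signMeasure_eq_smul_sum_dirac :
    signMeasure = (2 : ℝ≥0∞)⁻¹ • ∑ b : Bool, Measure.dirac (boolSign b) := by
  simp [signMeasure, boolSign, smul_add]

instance : IsProbabilityMeasure signMeasure :=
  ⟨by simp [signMeasure, ENNReal.inv_two_add_inv_two]⟩

def signMatrix {m d : ℕ} (g : Fin m × Fin d → Bool) : Fin m → Fin d → ℝ :=
  fun i j => boolSign (g (i, j))

section SignMatrix

variable {m d : ℕ}

lemma pi_pi_signMeasure :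
    Measure.pi (fun _ : Fin m => Measure.pi fun _ : Fin d => signMeasure) =
      ((2 : ℝ≥0∞) ^ (m * d))⁻¹ • ∑ g : Fin m × Fin d → Bool, Measure.dirac (signMatrix g) := by
  simp only [signMeasure_eq_smul_sum_dirac,
    Measure.pi_smul_sum_dirac _ (ENNReal.inv_ne_top.2 two_ne_zero), Fintype.card_fin]
  rw [Measure.pi_smul_sum_dirac _ (by simp), Fintype.card_fin, ← pow_mul, ENNReal.inv_pow, mul_comm]
  congr 1
  exact Fintype.sum_equiv (Equiv.curry _ _ _).symm _ _ fun f => rfl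

open Classical in
lemma pi_pi_signMeasure_apply (S : Set (Fin m → Fin d → ℝ)) :
    Measure.pi (fun _ : Fin m => Measure.pi fun _ : Fin d => signMeasure) S =
      ((2 : ℝ≥0∞) ^ (m * d))⁻¹ * (Finset.univ.filter fun g => signMatrix g ∈ S).card := by
  simp [pi_pi_signMeasure, Measure.dirac_apply, Set.indicator_apply, Finset.sum_boole]

variable {Ω : Type*} [MeasurableSpace Ω] {μ : Measure Ω} {W : Ω → Fin m → Fin d → ℝ}

open Classical in
lemma card_div_le_measure_preimage [IsFiniteMeasure μ]
    (hW : Measure.map W μ = Measure.pi fun _ : Fin m => Measure.pi fun _ : Fin d => signMeasure)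
    (S : Set (Fin m → Fin d → ℝ)) :
    ((Finset.univ.filter fun g => signMatrix g ∈ S).card : ℝ) / 2 ^ (m * d) ≤
      (μ (W ⁻¹' S)).toReal := by
  have haem : AEMeasurable W μ := .of_map_ne_zero (by rw [hW]; exact IsProbabilityMeasure.ne_zero _)
  -- `S` need not be measurable, but its trace on the finitely many sign matrices is.
  set T := S ∩ Set.range signMatrix
  have hT : MeasurableSet T := ((Set.finite_range _).subset Set.inter_subset_right).measurableSet
  calc ((Finset.univ.filter fun g => signMatrix g ∈ S).card : ℝ) / 2 ^ (m * d)
      = (Measure.map W μ T).toReal := by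
        rw [hW, pi_pi_signMeasure_apply]
        simp [T, div_eq_inv_mul]
    _ = (μ (W ⁻¹' T)).toReal := by rw [Measure.map_apply_of_aemeasurable haem hT]
    _ ≤ (μ (W ⁻¹' S)).toReal :=
        ENNReal.toReal_mono (measure_ne_top _ _)
          (measure_mono (Set.preimage_mono Set.inter_subset_left))

lemma ae_exists_eq_signMatrix
    (hW : Measure.map W μ = Measure.pi fun _ : Fin m => Measure.pi fun _ : Fin d => signMeasure) :
    ∀ᵐ ω ∂μ, ∃ g, W ω = signMatrix g := by
  have haem : AEMeasurable W μ := .of_map_ne_zero (by rw [hW]; exact IsProbabilityMeasure.ne_zero _)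
  refine ae_of_ae_map haem (p := fun w => ∃ g, w = signMatrix g) ?_
  rw [hW, ae_iff, pi_pi_signMeasure_apply]
  simp [Finset.filter_eq_empty_iff]

end SignMatrix

lemma nine_pow_mul_exp_neg_sq_half_le {n : ℕ} {s : ℝ} (hs : 9 * n ≤ s ^ 2) :
    9 ^ n * Real.exp (-s ^ 2 / 2) ≤ Real.exp (-n) := by
  have h9 : (9 : ℝ) ≤ Real.exp 3 := by
    have := pow_le_pow_left₀ (by norm_num) Real.exp_one_gt_d9.le 3
    rw [show (3 : ℝ) = (3 : ℕ) * 1 by norm_num, Real.exp_nat_mul]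
    linarith
  calc 9 ^ n * Real.exp (-s ^ 2 / 2) ≤ Real.exp 3 ^ n * Real.exp (-s ^ 2 / 2) := by gcongr
    _ = Real.exp (3 * n - s ^ 2 / 2) := by
        rw [← Real.exp_nat_mul, ← Real.exp_add]; ring_nf
    _ ≤ Real.exp (-n) := by
        gcongr
        linarith [(Nat.cast_nonneg n : (0 : ℝ) ≤ n)]

lemma EuclideanSpace.sum_sq_eq_one_of_mem_sphere {n : ℕ} {u : EuclideanSpace ℝ (Fin n)}
    (hu : u ∈ sphere 0 1) :
    ∑ i, u i ^ 2 = 1 := by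
  have h := EuclideanSpace.norm_sq_eq u
  rw [mem_sphere_zero_iff_norm.1 hu, one_pow] at h
  simpa using h.symm

section RandomSignMatrix

open scoped Matrix.Norms.L2Operator

variable {m d : ℕ}

lemma inner_toEuclideanLin_signMatrix (g : Fin m × Fin d → Bool) (u : EuclideanSpace ℝ (Fin d))
    (v : EuclideanSpace ℝ (Fin m)) :
    ⟪v, (Matrix.toEuclideanLin.trans LinearMap.toContinuousLinearMap)
      (Matrix.of (signMatrix g)) u⟫ = ∑ q, (v q.1 * u q.2) * boolSign (g q) := by
  simp [PiLp.inner_apply, Matrix.mulVec, dotProduct, signMatrix, Fintype.sum_prod_type,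
    Finset.mul_sum, mul_comm]
  simp only [mul_assoc]

lemma card_le_inner_toEuclideanLin_signMatrix {u : EuclideanSpace ℝ (Fin d)}
    {v : EuclideanSpace ℝ (Fin m)} (hu : u ∈ sphere 0 1) (hv : v ∈ sphere 0 1) {s : ℝ}
    (hs : 0 ≤ s) :
    ((Finset.univ.filter fun g : Fin m × Fin d → Bool => s ≤ ⟪v,
        (Matrix.toEuclideanLin.trans LinearMap.toContinuousLinearMap) (Matrix.of (signMatrix g))
          u⟫).card : ℝ) ≤ 2 ^ (m * d) * Real.exp (-s ^ 2 / 2) := by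
  have hsq : ∑ q : Fin m × Fin d, (v q.1 * u q.2) ^ 2 = 1 := by
    simp_rw [mul_pow, Fintype.sum_prod_type, ← Finset.mul_sum, ← Finset.sum_mul,
      EuclideanSpace.sum_sq_eq_one_of_mem_sphere hu,
      EuclideanSpace.sum_sq_eq_one_of_mem_sphere hv, mul_one]
  simp_rw [inner_toEuclideanLin_signMatrix]
  convert card_filter_le_sum_mul_boolSign hsq.le hs using 2
  simp

lemma card_lt_l2_opNorm_signMatrix_le :
    ((Finset.univ.filter fun g : Fin m × Fin d → Bool =>
        6 * (√d + √m) < ‖Matrix.of (signMatrix g)‖).card : ℝ) ≤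
      2 ^ (m * d) * Real.exp (-(d + m)) := by
  obtain ⟨N, hN, hNcard, hNc⟩ :=
    exists_finset_isCover_sphere (E := EuclideanSpace ℝ (Fin d)) (ε := 1 / 4) (by norm_num)
  obtain ⟨M, hM, hMcard, hMc⟩ :=
    exists_finset_isCover_sphere (E := EuclideanSpace ℝ (Fin m)) (ε := 1 / 4) (by norm_num)
  rw [finrank_euclideanSpace_fin] at hNcard hMcard
  norm_num at hNcard hMcard
  set s := 3 * (√d + √m)
  have hs : 0 ≤ s := by positivity
  set P : EuclideanSpace ℝ (Fin d) × EuclideanSpace ℝ (Fin m) → (Fin m × Fin d → Bool) → Prop :=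
    fun p g => s ≤ ⟪p.2,
      (Matrix.toEuclideanLin.trans LinearMap.toContinuousLinearMap) (Matrix.of (signMatrix g)) p.1⟫
  have hsub : (Finset.univ.filter fun g => 6 * (√d + √m) < ‖Matrix.of (signMatrix g)‖) ⊆
      (N ×ˢ M).biUnion fun p => Finset.univ.filter (P p) := by
    intro g hg
    simp only [Finset.mem_filter, Finset.mem_univ, true_and, Finset.mem_biUnion,
      Finset.mem_product, Prod.exists] at hg ⊢
    by_contra! h
    refine hg.not_ge ?_
    rw [Matrix.l2_opNorm_def, show 6 * (√d + √m) = 2 * s by ring]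
    exact ContinuousLinearMap.opNorm_le_of_isCover _ hN hNc hMc hs fun u hu v hv =>
      (not_le.1 (h u v ⟨hu, hv⟩)).le
  have hP : ∀ p ∈ N ×ˢ M, ((Finset.univ.filter (P p)).card : ℝ) ≤
      2 ^ (m * d) * Real.exp (-s ^ 2 / 2) := fun p hp =>
    card_le_inner_toEuclideanLin_signMatrix (hN (Finset.mem_product.1 hp).1)
      (hM (Finset.mem_product.1 hp).2) hs
  have hs2 : 9 * ((d + m : ℕ) : ℝ) ≤ s ^ 2 := by
    have := Real.sq_sqrt (Nat.cast_nonneg (α := ℝ) d)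
    have := Real.sq_sqrt (Nat.cast_nonneg (α := ℝ) m)
    push_cast
    nlinarith [mul_nonneg (Real.sqrt_nonneg (d : ℝ)) (Real.sqrt_nonneg (m : ℝ))]
  calc _ ≤ (((N ×ˢ M).biUnion fun p => Finset.univ.filter (P p)).card : ℝ) := by
        exact_mod_cast Finset.card_le_card hsub
    _ ≤ ∑ p ∈ N ×ˢ M, ((Finset.univ.filter (P p)).card : ℝ) := by
        exact_mod_cast Finset.card_biUnion_le
    _ ≤ N.card * M.card * (2 ^ (m * d) * Real.exp (-s ^ 2 / 2)) := by
        simpa [Finset.card_product] using Finset.sum_le_card_nsmul _ _ _ hP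
    _ ≤ 9 ^ d * 9 ^ m * (2 ^ (m * d) * Real.exp (-s ^ 2 / 2)) := by gcongr
    _ = 2 ^ (m * d) * (9 ^ (d + m) * Real.exp (-s ^ 2 / 2)) := by ring
    _ ≤ 2 ^ (m * d) * Real.exp (-(d + m)) := by
        gcongr
        exact_mod_cast nine_pow_mul_exp_neg_sq_half_le hs2

lemma one_sub_exp_le_card_l2_opNorm_signMatrix_le :
    1 - Real.exp (-(d + m)) ≤ ((Finset.univ.filter fun g : Fin m × Fin d → Bool =>
        ‖Matrix.of (signMatrix g)‖ ≤ 6 * (√d + √m)).card : ℝ) / 2 ^ (m * d) := by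
  have hcard := Finset.card_filter_add_card_filter_not (s := Finset.univ)
    fun g : Fin m × Fin d → Bool => ‖Matrix.of (signMatrix g)‖ ≤ 6 * (√d + √m)
  simp only [not_le, Finset.card_univ, Fintype.card_fun, Fintype.card_bool, Fintype.card_prod,
    Fintype.card_fin] at hcard
  have hcard' : ((2 ^ (m * d) : ℕ) : ℝ) = _ := congrArg (Nat.cast (R := ℝ)) hcard.symm
  push_cast at hcard'
  rw [le_div_iff₀ (by positivity), sub_mul, one_mul, mul_comm (Real.exp _)]
  linarith [card_lt_l2_opNorm_signMatrix_le (m := m) (d := d)]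

lemma one_sub_exp_le_measure_fSDP_le {Ω : Type*} [MeasurableSpace Ω] {μ : Measure Ω}
    [IsProbabilityMeasure μ] {W : Ω → Fin m → Fin d → ℝ}
    (hW : Measure.map W μ = Measure.pi fun _ : Fin m => Measure.pi fun _ : Fin d => signMeasure) :
    1 - Real.exp (-(d + m)) ≤
      (μ {ω | fSDP (Matrix.of (W ω)) ≤ 6 * (m * √d + d * √m)}).toReal := by
  set S := {w : Fin m → Fin d → ℝ | fSDP (Matrix.of w) ≤ 6 * (m * √d + d * √m)}
  have hS : ∀ g, ‖Matrix.of (signMatrix g)‖ ≤ 6 * (√d + √m) → signMatrix g ∈ S := by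
    intro g hg
    refine (fSDP_le_l2_opNorm _).trans ?_
    calc ‖Matrix.of (signMatrix g)‖ * √m * √d ≤ 6 * (√d + √m) * √m * √d := by gcongr
      _ = 6 * (m * √d + d * √m) := by
          linear_combination (6 * √d) * Real.sq_sqrt (Nat.cast_nonneg (α := ℝ) m) +
            (6 * √m) * Real.sq_sqrt (Nat.cast_nonneg (α := ℝ) d)
  calc 1 - Real.exp (-(d + m))
      ≤ ((Finset.univ.filter fun g => ‖Matrix.of (signMatrix g)‖ ≤ 6 * (√d + √m)).card : ℝ) /
          2 ^ (m * d) := one_sub_exp_le_card_l2_opNorm_signMatrix_le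
    _ ≤ ((Finset.univ.filter fun g => signMatrix g ∈ S).card : ℝ) / 2 ^ (m * d) := by
        gcongr with g
        exact hS g
    _ ≤ (μ (W ⁻¹' S)).toReal := card_div_le_measure_preimage hW S

end RandomSignMatrix

/-- Proposition 1: For a random matrix `W ∈ ℝ^{m×d}` with i.i.d.
uniform `{−1,+1}` entries, objective vector `c = 𝟏`, `x̄ = 0`, `ε = 1`, there is a
universal constant `γ` such that with probability at least `1 − exp(−(d+m))` the SDP
value satisfies `f_SDP ≤ γ (m √d + d √m)`, while almost surely `f_LP ≥ m d / 2`. -/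
theorem stmt6 :
    ∃ γ : ℝ, 0 < γ ∧
      ∀ (m d : ℕ), 0 < m → 0 < d →
      ∀ {Ω : Type} [MeasurableSpace Ω] (μ : Measure Ω) [IsProbabilityMeasure μ]
        (W : Ω → Fin m → Fin d → ℝ),
        Measure.map W μ =
          Measure.pi (fun _ : Fin m => Measure.pi fun _ : Fin d => signMeasure) →
        1 - Real.exp (-((d : ℝ) + m)) ≤
          (μ {ω | fSDP (Matrix.of (W ω)) ≤
            γ * (m * Real.sqrt d + d * Real.sqrt m)}).toReal ∧
        (∀ᵐ ω ∂μ, (m * d : ℝ) / 2 ≤ fLP (Matrix.of (W ω))) := by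
  refine ⟨6, by norm_num, fun m d _ _ Ω _ μ _ W hW => ⟨one_sub_exp_le_measure_fSDP_le hW, ?_⟩⟩
  filter_upwards [ae_exists_eq_signMatrix hW] with ω ⟨g, hg⟩
  convert sum_abs_div_two_le_fLP (Matrix.of (W ω)) using 2
  simp [hg, signMatrix, boolSign, apply_ite]
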